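/- For every odd integer n ≥ 13, if G is a triangle-free simple graph on n vertices and x₁x₂ is an edge of G with deg_G(x₂) ≤ (2/5)n, then the number of cycles of G containing the edge x₁x₂ is at most n² + 0.976·n·(((n−3)/2)!)². -/

import Mathlib

open SimpleGraph Finset
open scoped Nat

/-- The number of cycles of `G` (as distinct cycle subgraphs) that contain the edge `xy`. -/
noncomputable def cycleCountThroughEdge {V : Type*} (G : SimpleGraph V) (x y : V) : ℕ :=
  Nat.card {H : G.Subgraph //
    (∃ (u : V) (w : G.Walk u u), w.IsCycle ∧ w.toSubgraph = H) ∧ H.Adj x y}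

/-!
Rotating a cycle through `x₁x₂` so that it starts with the edge `x₁ → x₂` leaves a path from
`x₂` to `x₁`, so it suffices to count such paths, grown from `x₂` one vertex at a time. If the
current vertex has `t` unused neighbours and its successor `t'`, triangle-freeness makes their
neighbourhoods disjoint, so `t + t' ≤ r` for `r` unused vertices: the branching factors of two
consecutive steps multiply to at most about `(r / 2)²`. Moreover a vertex adjacent to `x₁` has no
neighbour adjacent to `x₁`, so at most `max 1 t` paths end within two steps. Induction over two
steps at a time bounds the number of paths, for `n = 2M + 3`, by about
`(deg x₂ - 1) · (M + 1) · pathCoeff M`, where `pathCoeff M ≤ 2.28 · M! · (M - 1)!`; with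
`deg x₂ ≤ 2n/5` this is at most `0.8 · 2.28 · (M + 1) · M!² ≤ 0.976 · n · M!²`.
-/

/-- The maximum of `oddPathBound m s` over `s ≤ 2m + 1` is `pathCoeff (m + 1)`, attained at
`s = m + 1`. -/
def pathCoeff : ℕ → ℕ
  | 0 => 1
  | m + 1 => (m + 1) * (m * pathCoeff m + 1)

def evenPathBound (m t : ℕ) : ℕ := min t (m + 1) * pathCoeff m

def oddPathBound (m t : ℕ) : ℕ := max 1 t + t * min (2 * m + 1 - t) (m + 1) * pathCoeff m

theorem one_le_pathCoeff : ∀ m, 1 ≤ pathCoeff m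
  | 0 => le_rfl
  | m + 1 => Nat.one_le_iff_ne_zero.2 (by simp [pathCoeff])

theorem oddPathBound_le_pathCoeff_succ {m s : ℕ} (hs : s ≤ 2 * m + 1) :
    oddPathBound m s ≤ pathCoeff (m + 1) := by
  have hc := one_le_pathCoeff m
  unfold oddPathBound
  rw [pathCoeff]
  rcases le_or_gt s m with hsm | hsm
  · rw [min_eq_right (by omega)]
    have : s * (m + 1) * pathCoeff m ≤ m * (m + 1) * pathCoeff m := by gcongr
    have : max 1 s ≤ m + 1 := by omega
    nlinarith
  · obtain ⟨j, rfl⟩ : ∃ j, s = m + 1 + j := ⟨s - (m + 1), by omega⟩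
    rw [max_eq_right (by omega), min_eq_left (by omega),
      show 2 * m + 1 - (m + 1 + j) = m - j by omega]
    obtain ⟨i, rfl⟩ : ∃ i, m = j + i := ⟨m - j, by omega⟩
    rw [show j + i - j = i by omega]
    nlinarith [Nat.mul_le_mul_left (j + j * j) hc]

theorem mul_oddPathBound_le {m s t : ℕ} (h : s + t ≤ 2 * m + 2) :
    t * oddPathBound m s ≤ evenPathBound (m + 1) t := by
  unfold evenPathBound
  rcases le_or_gt t (m + 2) with htm | htm
  · rw [min_eq_left htm]
    rcases Nat.eq_zero_or_pos t with rfl | ht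
    · simp
    · exact Nat.mul_le_mul_left t (oddPathBound_le_pathCoeff_succ (by omega))
  · have hc := one_le_pathCoeff m
    rw [min_eq_right htm.le, pathCoeff, oddPathBound, min_eq_right (by omega)]
    obtain ⟨i, rfl⟩ : ∃ i, t = m + 3 + i := ⟨t - (m + 3), by omega⟩
    rcases Nat.eq_zero_or_pos s with rfl | hs
    · simp only [max_eq_left (zero_le_one' ℕ), zero_mul, add_zero, mul_one]
      nlinarith [Nat.mul_le_mul_left ((m + 2) * (m + 1)) (Nat.le_add_left 1 (m * pathCoeff m))]
    · rw [max_eq_right hs]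
      have hts : (m + 3 + i) * s ≤ m * (m + 2) := by nlinarith
      nlinarith [Nat.mul_le_mul_right ((m + 1) * pathCoeff m) hts]

theorem pathCoeff_le_factorial_sq {M : ℕ} (hM : 5 ≤ M) :
    25 * (M * pathCoeff M + 1) + 25 * (M + 1) ≤ 57 * (M !) ^ 2 := by
  induction M, hM using Nat.le_induction with
  | base => decide
  | succ M hM ih =>
    rw [pathCoeff, Nat.factorial_succ]
    nlinarith [Nat.mul_le_mul_left ((M + 1) ^ 2) ih]

theorem oddPathBound_le_factorial_sq {M t : ℕ} (hM : 5 ≤ M) (ht : 5 * t ≤ 4 * M + 1) :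
    125 * oddPathBound M t ≤ 125 * (2 * M + 3) + 122 * (2 * M + 3) * (M !) ^ 2 := by
  have hc := pathCoeff_le_factorial_sq hM
  have hmin : t * min (2 * M + 1 - t) (M + 1) * pathCoeff M ≤ t * (M + 1) * pathCoeff M := by
    gcongr; exact min_le_right _ _
  suffices 125 * (t * (M + 1) * pathCoeff M) ≤ 122 * (2 * M + 3) * (M !) ^ 2 by
    unfold oddPathBound
    have : max 1 t ≤ 2 * M + 3 := by omega
    omega
  refine Nat.le_of_mul_le_mul_left ?_ (show 0 < M by omega)
  calc M * (125 * (t * (M + 1) * pathCoeff M))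
      = 5 * t * (M + 1) * (25 * (M * pathCoeff M)) := by ring
    _ ≤ (4 * M + 1) * (M + 1) * (57 * (M !) ^ 2) := Nat.mul_le_mul (by nlinarith) (by omega)
    _ = 57 * ((4 * M + 1) * (M + 1)) * (M !) ^ 2 := by ring
    _ ≤ 122 * (M * (2 * M + 3)) * (M !) ^ 2 := by gcongr ?_ * _; nlinarith
    _ = M * (122 * (2 * M + 3) * (M !) ^ 2) := by ring

namespace SimpleGraph.Walk

variable {V : Type*} {G : SimpleGraph V}

theorem IsCycle.exists_isPath_toSubgraph_eq_of_mem_edges {x y : V} {c : G.Walk x x}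
    (hc : c.IsCycle) (h : G.Adj x y) (he : s(x, y) ∈ c.edges) :
    ∃ p : G.Walk y x, p.IsPath ∧ c.toSubgraph = (cons h p).toSubgraph := by
  cases c with
  | nil => simp at he
  | @cons _ v _ h' q =>
    have hq : q.IsPath := ((cons_isCycle_iff q h').1 hc).1
    rcases List.mem_cons.1 (edges_cons h' q ▸ he) with he | he
    · obtain rfl : y = v := Sym2.congr_right.1 he
      exact ⟨q, hq, rfl⟩
    · have hy : y = q.reverse.snd := hq.reverse.eq_snd_of_mem_edges (by simpa using he)
      generalize hr : q.reverse = r at hy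
      cases r with
      | nil => exact (h'.ne rfl).elim
      | cons h'' p =>
        rw [snd_cons] at hy
        subst hy
        have hrev : cons h (p.concat h'.symm) = (cons h' q).reverse := by
          rw [reverse_cons, hr]; rfl
        refine ⟨p.concat h'.symm, ?_, by rw [hrev, toSubgraph_reverse]⟩
        exact ((cons_isCycle_iff _ h).1 (hrev ▸ hc.reverse)).1

theorem IsCycle.exists_isPath_toSubgraph_eq {w x y : V} {c : G.Walk w w} (hc : c.IsCycle)
    (h : G.Adj x y) (hxy : c.toSubgraph.Adj x y) :
    ∃ p : G.Walk y x, p.IsPath ∧ c.toSubgraph = (cons h p).toSubgraph := by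
  classical
  have he : s(x, y) ∈ c.edges := (mem_edges_toSubgraph c).1 (Subgraph.mem_edgeSet.2 hxy)
  have hx : x ∈ c.support := c.fst_mem_support_of_mem_edges he
  rw [← toSubgraph_rotate c hx]
  exact (hc.rotate hx).exists_isPath_toSubgraph_eq_of_mem_edges h
    ((rotate_edges c x hx).mem_iff.2 he)

end SimpleGraph.Walk

namespace SimpleGraph

variable {V : Type*} [DecidableEq V] (G : SimpleGraph V) [DecidableRel G.Adj] (x : V)

/-- The supports `[u, v₁, …, vⱼ, x]` of walks from `u` to `x` with `j ≤ k` distinct inner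
vertices, all in `S`. -/
def pathSupports : ℕ → V → Finset V → Finset (List V)
  | 0, u, _ => if G.Adj u x then {[u, x]} else ∅
  | k + 1, u, S => (if G.Adj u x then {[u, x]} else ∅) ∪
      (S.filter (G.Adj u)).biUnion fun v => (pathSupports k v (S.erase v)).image (u :: ·)

variable {G x}

theorem mem_pathSupports_of_adj {k : ℕ} {u : V} {S : Finset V} (h : G.Adj u x) :
    [u, x] ∈ pathSupports G x k u S := by
  cases k <;> simp [pathSupports, h]

theorem Walk.IsPath.support_mem_pathSupports {u : V} {p : G.Walk u x} (hp : p.IsPath)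
    (hux : u ≠ x) {S : Finset V} (hS : ∀ y ∈ p.support.tail, y ≠ x → y ∈ S) {k : ℕ}
    (hk : p.length ≤ k + 1) : p.support ∈ pathSupports G x k u S := by
  induction p generalizing k S with
  | nil => exact (hux rfl).elim
  | @cons u v x h q ih =>
    have hq : q.IsPath := hp.of_cons
    by_cases hvx : v = x
    · subst hvx
      obtain rfl : q = .nil := Walk.eq_nil_iff_nil.2 (Walk.isPath_iff_nil.1 hq)
      exact mem_pathSupports_of_adj h
    obtain ⟨k, rfl⟩ : ∃ k', k = k' + 1 := by
      refine Nat.exists_eq_add_one.2 (Nat.pos_of_ne_zero fun hk0 => hvx ?_)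
      simp only [Walk.length_cons, hk0] at hk
      exact q.eq_of_length_eq_zero (by omega)
    have hvS : v ∈ S := hS v (by simp) hvx
    have hv_tail : v ∉ q.support.tail := by
      have := hq.support_nodup
      rw [← q.cons_tail_support] at this
      exact (List.nodup_cons.1 this).1
    have hq_mem : q.support ∈ pathSupports G x k v (S.erase v) := by
      refine ih hq hvx (fun y hy hyx => mem_erase.2 ⟨?_, hS y ?_ hyx⟩) (by simpa using hk)
      · rintro rfl; exact hv_tail hy
      · simpa using List.mem_of_mem_tail hy
    simp only [pathSupports, Walk.support_cons]
    exact mem_union_right _ (mem_biUnion.2 ⟨v, mem_filter.2 ⟨hvS, h⟩, mem_image_of_mem _ hq_mem⟩)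

theorem card_pathSupports_le (k : ℕ) (u : V) (S : Finset V) :
    #(pathSupports G x k u S) ≤ (if G.Adj u x then 1 else 0) +
      ∑ v ∈ S.filter (G.Adj u), #(pathSupports G x (k - 1) v (S.erase v)) := by
  cases k with
  | zero => split_ifs <;> simp [pathSupports, *]
  | succ k =>
    refine (card_union_le _ _).trans (add_le_add (by split_ifs <;> simp) ?_)
    exact card_biUnion_le.trans (sum_le_sum fun v _ => card_image_le)

theorem cycleCountThroughEdge_le_card_pathSupports [Fintype V] {x₁ x₂ : V} (h : G.Adj x₁ x₂) :
    cycleCountThroughEdge G x₁ x₂ ≤ #(pathSupports G x₁ (Fintype.card V) x₂ {x₁, x₂}ᶜ) := by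
  have hpath : ∀ H : {H : G.Subgraph //
      (∃ (u : V) (w : G.Walk u u), w.IsCycle ∧ w.toSubgraph = H) ∧ H.Adj x₁ x₂},
      ∃ p : G.Walk x₂ x₁, p.IsPath ∧ H.1 = (Walk.cons h p).toSubgraph := by
    rintro ⟨H, ⟨u, c, hc, rfl⟩, hH⟩
    exact hc.exists_isPath_toSubgraph_eq h hH
  choose p hp hpH using hpath
  have hmem : ∀ H, (p H).support ∈ pathSupports G x₁ (Fintype.card V) x₂ {x₁, x₂}ᶜ := by
    intro H
    refine (hp H).support_mem_pathSupports h.ne.symm (fun y hy hyx => ?_)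
      ((hp H).length_lt.le.trans (Nat.le_succ _))
    have hnd := (hp H).support_nodup
    rw [← (p H).cons_tail_support] at hnd
    simp only [mem_compl, mem_insert, mem_singleton, not_or]
    exact ⟨hyx, fun hy2 => (List.nodup_cons.1 hnd).1 (hy2 ▸ hy)⟩
  rw [cycleCountThroughEdge, ← Nat.card_eq_finsetCard]
  refine Nat.card_le_card_of_injective (fun H => ⟨_, hmem H⟩) fun H H' hHH' => Subtype.ext ?_
  rw [hpH H, hpH H', Walk.support_injective (congrArg Subtype.val hHH')]

theorem CliqueFree.card_filter_adj_add_card_filter_adj_le (htf : G.CliqueFree 3) {u v : V}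
    {S : Finset V} (huv : G.Adj u v) :
    #((S.erase v).filter (G.Adj v)) + #(S.filter (G.Adj u)) ≤ #S := by
  rw [← card_union_of_disjoint]
  · exact card_le_card (union_subset (filter_subset _ _ |>.trans (erase_subset _ _))
      (filter_subset _ _))
  · refine Finset.disjoint_left.2 fun w hvw huw => ?_
    exact htf {u, v, w} (is3Clique_triple_iff.2 ⟨huv, (mem_filter.1 huw).2, (mem_filter.1 hvw).2⟩)

theorem CliqueFree.indicator_add_sum_indicator_le (htf : G.CliqueFree 3) (u : V)
    (S : Finset V) :
    (if G.Adj u x then 1 else 0) + ∑ v ∈ S.filter (G.Adj u), (if G.Adj v x then 1 else 0) ≤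
      max 1 #(S.filter (G.Adj u)) := by
  by_cases hux : G.Adj u x
  · rw [if_pos hux, sum_eq_zero fun v hv => if_neg fun hvx =>
      htf {u, v, x} (is3Clique_triple_iff.2 ⟨(mem_filter.1 hv).2, hux, hvx⟩)]
    exact le_max_left _ _
  · rw [if_neg hux, zero_add, ← card_filter]
    exact (card_filter_le _ _).trans (le_max_right _ _)

theorem card_pathSupports_le_odd (htf : G.CliqueFree 3) {m : ℕ}
    (heven : ∀ k u (S : Finset V), #S = 2 * m →
      #(pathSupports G x k u S) ≤ evenPathBound m #(S.filter (G.Adj u)) +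
        if G.Adj u x then 1 else 0)
    (k : ℕ) (u : V) (S : Finset V) (hS : #S = 2 * m + 1) :
    #(pathSupports G x k u S) ≤ oddPathBound m #(S.filter (G.Adj u)) := by
  set t := #(S.filter (G.Adj u))
  have hchild : ∀ v ∈ S.filter (G.Adj u), #(pathSupports G x (k - 1) v (S.erase v)) ≤
      min (2 * m + 1 - t) (m + 1) * pathCoeff m + if G.Adj v x then 1 else 0 := by
    intro v hv
    obtain ⟨hvS, huv⟩ := mem_filter.1 hv
    have hsum := htf.card_filter_adj_add_card_filter_adj_le (S := S) huv
    refine (heven _ v _ (by rw [card_erase_of_mem hvS]; omega)).trans ?_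
    unfold evenPathBound
    gcongr
    omega
  calc #(pathSupports G x k u S)
      ≤ (if G.Adj u x then 1 else 0) +
          ∑ v ∈ S.filter (G.Adj u), #(pathSupports G x (k - 1) v (S.erase v)) :=
        card_pathSupports_le k u S
    _ ≤ (if G.Adj u x then 1 else 0) + ∑ v ∈ S.filter (G.Adj u),
          (min (2 * m + 1 - t) (m + 1) * pathCoeff m + if G.Adj v x then 1 else 0) := by
        gcongr with v hv; exact hchild v hv
    _ = ((if G.Adj u x then 1 else 0) + ∑ v ∈ S.filter (G.Adj u), if G.Adj v x then 1 else 0) +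
          t * (min (2 * m + 1 - t) (m + 1) * pathCoeff m) := by
        rw [sum_add_distrib, sum_const, smul_eq_mul]; ring
    _ ≤ max 1 t + t * (min (2 * m + 1 - t) (m + 1) * pathCoeff m) := by
        gcongr; exact htf.indicator_add_sum_indicator_le u S
    _ = oddPathBound m t := by unfold oddPathBound; ring

theorem card_pathSupports_le_even (htf : G.CliqueFree 3) (m : ℕ) :
    ∀ k u (S : Finset V), #S = 2 * m →
      #(pathSupports G x k u S) ≤ evenPathBound m #(S.filter (G.Adj u)) +
        if G.Adj u x then 1 else 0 := by
  induction m with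
  | zero =>
    intro k u S hS
    rw [card_eq_zero.1 hS]
    simpa [evenPathBound] using card_pathSupports_le (G := G) (x := x) k u ∅
  | succ m ih =>
    intro k u S hS
    set t := #(S.filter (G.Adj u))
    have hchild : ∀ v ∈ S.filter (G.Adj u),
        t * #(pathSupports G x (k - 1) v (S.erase v)) ≤ evenPathBound (m + 1) t := by
      intro v hv
      obtain ⟨hvS, huv⟩ := mem_filter.1 hv
      have hsum := htf.card_filter_adj_add_card_filter_adj_le (S := S) huv
      refine (Nat.mul_le_mul_left t (card_pathSupports_le_odd htf ih _ v _ ?_)).trans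
        (mul_oddPathBound_le (by omega))
      rw [card_erase_of_mem hvS]; omega
    have hsum : ∑ v ∈ S.filter (G.Adj u), #(pathSupports G x (k - 1) v (S.erase v)) ≤
        evenPathBound (m + 1) t := by
      rcases Nat.eq_zero_or_pos t with ht | ht
      · simp [card_eq_zero.1 ht]
      refine Nat.le_of_mul_le_mul_left ?_ ht
      rw [mul_sum]
      exact (sum_le_card_nsmul _ _ _ hchild).trans (by rw [smul_eq_mul])
    calc #(pathSupports G x k u S)
        ≤ (if G.Adj u x then 1 else 0) +
            ∑ v ∈ S.filter (G.Adj u), #(pathSupports G x (k - 1) v (S.erase v)) :=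
          card_pathSupports_le k u S
      _ ≤ evenPathBound (m + 1) t + if G.Adj u x then 1 else 0 := by rw [add_comm]; gcongr

theorem card_filter_adj_compl_pair_add_one_le_degree [Fintype V] {x₁ x₂ : V}
    (h : G.Adj x₁ x₂) : #(({x₁, x₂}ᶜ : Finset V).filter (G.Adj x₂)) + 1 ≤ G.degree x₂ := by
  rw [← card_neighborFinset_eq_degree, ← card_insert_of_notMem (a := x₁) (by simp)]
  refine card_le_card fun y hy => (mem_neighborFinset _ _ _).2 ?_
  rcases mem_insert.1 hy with rfl | hy
  · exact h.symm
  · exact (mem_filter.1 hy).2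

end SimpleGraph

theorem stmt_18 (n : ℕ) (hno : Odd n) (hn : 13 ≤ n) {V : Type} [Fintype V]
    (G : SimpleGraph V) [DecidableRel G.Adj] (hcard : Fintype.card V = n)
    (htf : G.CliqueFree 3) (x₁ x₂ : V) (hadj : G.Adj x₁ x₂)
    (hdeg : (G.degree x₂ : ℝ) ≤ 2 / 5 * n) :
    (cycleCountThroughEdge G x₁ x₂ : ℝ) ≤
      (n : ℝ) ^ 2 + 0.976 * n * (((n - 3) / 2).factorial : ℝ) ^ 2 := by
  classical
  obtain ⟨M, rfl⟩ : ∃ M, n = 2 * M + 3 := ⟨(n - 3) / 2, by obtain ⟨m, rfl⟩ := hno; omega⟩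
  rw [show (2 * M + 3 - 3) / 2 = M by omega]
  have hS : #({x₁, x₂}ᶜ : Finset V) = 2 * M + 1 := by
    rw [card_compl, card_pair hadj.ne, hcard]; omega
  have ht : 5 * #(({x₁, x₂}ᶜ : Finset V).filter (G.Adj x₂)) ≤ 4 * M + 1 := by
    push_cast at hdeg
    have h5 : 5 * G.degree x₂ ≤ 2 * (2 * M + 3) := by
      exact_mod_cast (by linarith : (5 * G.degree x₂ : ℝ) ≤ 2 * (2 * M + 3))
    have := card_filter_adj_compl_pair_add_one_le_degree hadj
    omega
  have hpaths := card_pathSupports_le_odd (x := x₁) htf (card_pathSupports_le_even htf M)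
    (Fintype.card V) x₂ _ hS
  have hnum := oddPathBound_le_factorial_sq (by omega : 5 ≤ M) ht
  have hcount : (125 : ℝ) * cycleCountThroughEdge G x₁ x₂ ≤
      125 * (2 * M + 3) + 122 * (2 * M + 3) * (M ! : ℝ) ^ 2 := by
    exact_mod_cast (Nat.mul_le_mul_left 125
      ((cycleCountThroughEdge_le_card_pathSupports hadj).trans hpaths)).trans hnum
  push_cast
  nlinarith
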